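/- arXiv:2306.13049 — 2 statements merged into one kernel-verified Lean document; each statement's English description precedes it below -/
import Mathlib

section
/- An L_a-theory T proves every true Σ₁-sentence (i.e., T is Σ₁-complete) if and only if T proves every axiom of R₀. -/
open FirstOrder FirstOrder.Language

/-- Function symbols of the arithmetic language `L_a = {0, S, +, ×, ≤}`. -/
inductive AFunc : ℕ → Type
  | zero : AFunc 0
  | succ : AFunc 1
  | add : AFunc 2
  | mul : AFunc 2

/-- Relation symbols of `L_a`: the single binary relation `≤`. -/
inductive ARel : ℕ → Type
  | le : ARel 2

/-- The first-order language of arithmetic `L_a = {0, S, +, ×, ≤}`. -/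
def La : Language := ⟨AFunc, ARel⟩

/-- The standard model ℕ as an `La`-structure. -/
instance : La.Structure ℕ where
  funMap := fun {n} f => match f with
    | .zero => fun _ => 0
    | .succ => fun v => v 0 + 1
    | .add => fun v => v 0 + v 1
    | .mul => fun v => v 0 * v 1
  RelMap := fun {n} r => match r with
    | .le => fun v => v 0 ≤ v 1

/-- The term `0`. -/
def zeroT {β : Type} : La.Term β := Term.func AFunc.zero ![]
/-- The term `S t`. -/
def succT {β : Type} (t : La.Term β) : La.Term β := Term.func AFunc.succ ![t]
/-- The term `t + u`. -/
def addT {β : Type} (t u : La.Term β) : La.Term β := Term.func AFunc.add ![t, u]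
/-- The term `t × u`. -/
def mulT {β : Type} (t u : La.Term β) : La.Term β := Term.func AFunc.mul ![t, u]

/-- The numeral `S…S0`. -/
def num {β : Type} : ℕ → La.Term β
  | 0 => zeroT
  | n + 1 => succT (num n)

/-- The atomic formula `t ≤ u`. -/
def leF {α : Type} {n : ℕ} (t u : La.Term (α ⊕ Fin n)) : La.BoundedFormula α n :=
  Relations.boundedFormula ARel.le ![t, u]

/-- The formula `t < u`, i.e. `t ≤ u ∧ t ≠ u`. -/
def ltF {α : Type} {n : ℕ} (t u : La.Term (α ⊕ Fin n)) : La.BoundedFormula α n :=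
  leF t u ⊓ ∼(t =' u)

/-- Lift a term of context `n` to context `n+1`. -/
def liftT {α : Type} {n : ℕ} (t : La.Term (α ⊕ Fin n)) : La.Term (α ⊕ Fin (n + 1)) :=
  t.relabel (Sum.map id Fin.castSucc)

/-- The de Bruijn variable `i` as a term. -/
def vr {α : Type} {n : ℕ} (i : Fin n) : La.Term (α ⊕ Fin n) := Term.var (Sum.inr i)

/-- The disjunction `⋁_{i ≤ n} x = ī` (with `x` the de Bruijn variable 0). -/
def disjEq : ℕ → La.BoundedFormula Empty 1
  | 0 => (vr 0 : La.Term _) =' num 0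
  | n + 1 => disjEq n ⊔ ((vr 0 : La.Term _) =' num (n + 1))

/-- Axiom R1: `m̄ + n̄ = (m+n)̄`. -/
def axR1 (m n : ℕ) : La.Sentence := addT (num m) (num n) =' num (m + n)
/-- Axiom R2: `m̄ × n̄ = (m·n)̄`. -/
def axR2 (m n : ℕ) : La.Sentence := mulT (num m) (num n) =' num (m * n)
/-- Axiom R3: `m̄ ≠ n̄` (for `m ≠ n`). -/
def axR3 (m n : ℕ) : La.Sentence := ∼((num m : La.Term _) =' num n)
/-- Axiom R4: `∀x (x ≤ n̄ → ⋁_{i ≤ n} x = ī)`. -/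
def axR4 (n : ℕ) : La.Sentence := ∀' (leF (vr 0) (num n) ⟹ disjEq n)
/-- Axiom R5': `m̄ ≤ n̄` (for `m ≤ n`). -/
def axR5' (m n : ℕ) : La.Sentence := leF (num m : La.Term (Empty ⊕ Fin 0)) (num n)

/-- The theory `R₀`, axiomatized by R1–R4 and R5'. -/
def R0 : La.Theory :=
  {φ | ∃ m n : ℕ, φ = axR1 m n} ∪
  {φ | ∃ m n : ℕ, φ = axR2 m n} ∪
  {φ | ∃ m n : ℕ, m ≠ n ∧ φ = axR3 m n} ∪
  {φ | ∃ n : ℕ, φ = axR4 n} ∪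
  {φ | ∃ m n : ℕ, m ≤ n ∧ φ = axR5' m n}

/-- Δ₀-formulas of `L_a`: built from atomic formulas by Boolean connectives and
bounded quantifiers `∀ y ≤ t`, `∃ y ≤ t`. -/
inductive IsDelta0 : ∀ {α : Type} {n : ℕ}, La.BoundedFormula α n → Prop
  | falsum {α : Type} {n : ℕ} : IsDelta0 (⊥ : La.BoundedFormula α n)
  | equal {α : Type} {n : ℕ} (t u : La.Term (α ⊕ Fin n)) : IsDelta0 (t =' u)
  | le {α : Type} {n : ℕ} (t u : La.Term (α ⊕ Fin n)) : IsDelta0 (leF t u)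
  | imp {α : Type} {n : ℕ} {φ ψ : La.BoundedFormula α n} :
      IsDelta0 φ → IsDelta0 ψ → IsDelta0 (φ ⟹ ψ)
  | ball {α : Type} {n : ℕ} (t : La.Term (α ⊕ Fin n)) {φ : La.BoundedFormula α (n + 1)} :
      IsDelta0 φ →
      IsDelta0 (∀' (leF (Term.var (Sum.inr (Fin.last n))) (liftT t) ⟹ φ))
  | bex {α : Type} {n : ℕ} (t : La.Term (α ⊕ Fin n)) {φ : La.BoundedFormula α (n + 1)} :
      IsDelta0 φ →
      IsDelta0 (∃' (leF (Term.var (Sum.inr (Fin.last n))) (liftT t) ⊓ φ))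

/-- A Σ₁-formula: an existential block (possibly empty) in front of a Δ₀-formula. -/
def IsSigma1 {α : Type} (φ : La.Formula α) : Prop :=
  ∃ (m : ℕ) (δ : La.BoundedFormula α m), IsDelta0 δ ∧ φ = δ.exs

/-- Pure Δ₀-formulas: Δ₀-formulas in which the atomic subformulas are only
`x₀ = x₁`, `0 = x₀`, `S x₀ = x₁`, `x₀ + x₁ = x₂`, `x₀ × x₁ = x₂`, and `x₀ ≤ x₁`,
with all arguments variables, and the bounds of bounded quantifiers are variables. -/
inductive IsPureDelta0 : ∀ {α : Type} {n : ℕ}, La.BoundedFormula α n → Prop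
  | eq {α : Type} {n : ℕ} (w₁ w₂ : α ⊕ Fin n) :
      IsPureDelta0 ((Term.var w₁ : La.Term _) =' Term.var w₂)
  | zeroEq {α : Type} {n : ℕ} (w : α ⊕ Fin n) :
      IsPureDelta0 ((zeroT : La.Term _) =' Term.var w)
  | succEq {α : Type} {n : ℕ} (w₁ w₂ : α ⊕ Fin n) :
      IsPureDelta0 (succT (Term.var w₁) =' (Term.var w₂ : La.Term _))
  | addEq {α : Type} {n : ℕ} (w₁ w₂ w₃ : α ⊕ Fin n) :
      IsPureDelta0 (addT (Term.var w₁) (Term.var w₂) =' (Term.var w₃ : La.Term _))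
  | mulEq {α : Type} {n : ℕ} (w₁ w₂ w₃ : α ⊕ Fin n) :
      IsPureDelta0 (mulT (Term.var w₁) (Term.var w₂) =' (Term.var w₃ : La.Term _))
  | le {α : Type} {n : ℕ} (w₁ w₂ : α ⊕ Fin n) :
      IsPureDelta0 (leF (Term.var w₁) (Term.var w₂))
  | falsum {α : Type} {n : ℕ} : IsPureDelta0 (⊥ : La.BoundedFormula α n)
  | imp {α : Type} {n : ℕ} {φ ψ : La.BoundedFormula α n} :
      IsPureDelta0 φ → IsPureDelta0 ψ → IsPureDelta0 (φ ⟹ ψ)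
  | ball {α : Type} {n : ℕ} (w : α ⊕ Fin n) {φ : La.BoundedFormula α (n + 1)} :
      IsPureDelta0 φ →
      IsPureDelta0 (∀' (leF (Term.var (Sum.inr (Fin.last n))) (Term.var (Sum.map id Fin.castSucc w)) ⟹ φ))
  | bex {α : Type} {n : ℕ} (w : α ⊕ Fin n) {φ : La.BoundedFormula α (n + 1)} :
      IsPureDelta0 φ →
      IsPureDelta0 (∃' (leF (Term.var (Sum.inr (Fin.last n))) (Term.var (Sum.map id Fin.castSucc w)) ⊓ φ))

/-- A pure Σ₁-formula: an existential block (possibly empty) in front of a pure Δ₀-formula. -/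
def IsPureSigma1 {α : Type} (φ : La.Formula α) : Prop :=
  ∃ (m : ℕ) (δ : La.BoundedFormula α m), IsPureDelta0 δ ∧ φ = δ.exs

/-- A pure 1-Σ₁ sentence: `∃x σ₀(x)` with `σ₀` pure Δ₀ and a single existential quantifier. -/
def IsPure1Sigma1 (σ : La.Sentence) : Prop :=
  ∃ δ : La.BoundedFormula Empty 1, IsPureDelta0 δ ∧ σ = ∃' δ

section Aux

variable {M : Type} [La.Structure M]

/-- Interpretation of the numeral `k` in a structure `M`. -/
def nM (M : Type) [La.Structure M] : ℕ → M
  | 0 => Structure.funMap (L := La) AFunc.zero ![]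
  | k + 1 => Structure.funMap (L := La) AFunc.succ ![nM M k]

@[simp] lemma realize_num {β : Type} (env : β → M) (k : ℕ) :
    (num k : La.Term β).realize env = nM M k := by
  induction k with
  | zero =>
    show Structure.funMap (L := La) AFunc.zero _ = _
    rw [nM]
    congr
    funext i
    exact i.elim0
  | succ k ih =>
    show Structure.funMap (L := La) AFunc.succ _ = _
    rw [nM]
    congr
    funext i
    fin_cases i
    simpa using ih

@[simp] lemma nM_nat (k : ℕ) : nM ℕ k = k := by
  induction k with
  | zero => rfl
  | succ k ih => show nM ℕ k + 1 = k + 1; rw [ih]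

lemma relMap_le_nat (a b : ℕ) : Structure.RelMap (L := La) ARel.le ![a, b] ↔ a ≤ b := by
  show (![a, b] 0 ≤ ![a, b] 1) ↔ a ≤ b
  simp

lemma realize_leF {α : Type} {n : ℕ} (t u : La.Term (α ⊕ Fin n)) (v : α → M)
    (xs : Fin n → M) :
    (leF t u).Realize v xs ↔
      Structure.RelMap (L := La) ARel.le ![t.realize (Sum.elim v xs), u.realize (Sum.elim v xs)] := by
  rw [leF, show (Relations.boundedFormula ARel.le ![t, u] : La.BoundedFormula α n) =
    Relations.boundedFormula₂ ARel.le t u from rfl]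
  exact BoundedFormula.realize_rel₂

/-- The facts about a model of `R0` that we need. -/
structure R0Facts (M : Type) [La.Structure M] : Prop where
  add : ∀ m n : ℕ, Structure.funMap (L := La) AFunc.add ![nM M m, nM M n] = nM M (m + n)
  mul : ∀ m n : ℕ, Structure.funMap (L := La) AFunc.mul ![nM M m, nM M n] = nM M (m * n)
  inj : Function.Injective (nM M)
  bdd : ∀ (n : ℕ) (x : M), Structure.RelMap (L := La) ARel.le ![x, nM M n] → ∃ i ≤ n, x = nM M i
  le : ∀ m n : ℕ, m ≤ n → Structure.RelMap (L := La) ARel.le ![nM M m, nM M n]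

lemma R0Facts.le_iff (h : R0Facts M) (m n : ℕ) :
    Structure.RelMap (L := La) ARel.le ![nM M m, nM M n] ↔ m ≤ n := by
  constructor
  · intro hle
    obtain ⟨i, hi, e⟩ := h.bdd n _ hle
    rwa [h.inj e]
  · exact h.le m n

lemma natFacts : R0Facts ℕ := by
  refine ⟨fun m n => ?_, fun m n => ?_, fun a b e => ?_, fun n x hx => ?_, fun m n hmn => ?_⟩
  · show ![nM ℕ m, nM ℕ n] 0 + ![nM ℕ m, nM ℕ n] 1 = nM ℕ (m + n); simp
  · show ![nM ℕ m, nM ℕ n] 0 * ![nM ℕ m, nM ℕ n] 1 = nM ℕ (m * n); simp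
  · simpa using e
  · exact ⟨x, by simpa using (relMap_le_nat x n).mp (by simpa using hx), by simp⟩
  · simpa using (relMap_le_nat m n).mpr hmn

/-- Terms evaluate numeral-wise in a model of R0. -/
lemma realize_term_nM {β : Type} (h : R0Facts M) (e : β → ℕ) (t : La.Term β) :
    t.realize (fun b => nM M (e b)) = nM M (t.realize e) := by
  induction t with
  | var => rfl
  | func f ts ih =>
    cases f with
    | zero =>
      show Structure.funMap (L := La) AFunc.zero _ = nM M (Structure.funMap (L := La) AFunc.zero _)
      rw [show (Structure.funMap (L := La) (M := ℕ) AFunc.zero fun i => Term.realize e (ts i)) = 0 from rfl]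
      rw [nM]
      congr
      funext i
      exact i.elim0
    | succ =>
      show Structure.funMap (L := La) AFunc.succ _ = nM M (Term.realize e (ts 0) + 1)
      rw [nM]
      congr 1
      funext i
      fin_cases i
      simpa using ih 0
    | add =>
      show Structure.funMap (L := La) AFunc.add _ = nM M (Term.realize e (ts 0) + Term.realize e (ts 1))
      rw [← h.add]
      congr 1
      funext i
      fin_cases i <;> simpa using ih _
    | mul =>
      show Structure.funMap (L := La) AFunc.mul _ = nM M (Term.realize e (ts 0) * Term.realize e (ts 1))
      rw [← h.mul]
      congr 1
      funext i
      fin_cases i <;> simpa using ih _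

lemma nM_comp_snoc {n : ℕ} (v : Fin n → ℕ) (a : ℕ) :
    (fun i => nM M ((Fin.snoc v a : Fin (n + 1) → ℕ) i)) =
      Fin.snoc (fun i => nM M (v i)) (nM M a) := by
  funext i
  refine Fin.lastCases ?_ (fun j => ?_) i <;> simp

lemma nM_comp_elim {α : Type} {n : ℕ} (xs : α → ℕ) (v : Fin n → ℕ) :
    (fun b => nM M (Sum.elim xs v b)) = Sum.elim (fun a => nM M (xs a)) (fun i => nM M (v i)) := by
  funext b; cases b <;> rfl

lemma liftT_realize {α : Type} {n : ℕ} (t : La.Term (α ⊕ Fin n)) {X : Type} [La.Structure X]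
    (xs : α → X) (v : Fin n → X) (a : X) :
    (liftT t).realize (Sum.elim xs (Fin.snoc v a)) = t.realize (Sum.elim xs v) := by
  rw [liftT, Term.realize_relabel]
  congr 1
  funext b
  cases b with
  | inl a => rfl
  | inr i => simp

lemma realize_ballF {α : Type} {n : ℕ} {X : Type} [La.Structure X]
    (t : La.Term (α ⊕ Fin n)) (φ : La.BoundedFormula α (n + 1)) (xs : α → X) (v : Fin n → X) :
    (∀' (leF (Term.var (Sum.inr (Fin.last n))) (liftT t) ⟹ φ)).Realize xs v ↔
      ∀ a : X, Structure.RelMap (L := La) ARel.le ![a, t.realize (Sum.elim xs v)] →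
        φ.Realize xs (Fin.snoc v a) := by
  rw [BoundedFormula.realize_all]
  refine forall_congr' fun a => ?_
  rw [BoundedFormula.realize_imp, realize_leF, Term.realize_var, liftT_realize]
  simp

lemma realize_bexF {α : Type} {n : ℕ} {X : Type} [La.Structure X]
    (t : La.Term (α ⊕ Fin n)) (φ : La.BoundedFormula α (n + 1)) (xs : α → X) (v : Fin n → X) :
    (∃' (leF (Term.var (Sum.inr (Fin.last n))) (liftT t) ⊓ φ)).Realize xs v ↔
      ∃ a : X, Structure.RelMap (L := La) ARel.le ![a, t.realize (Sum.elim xs v)] ∧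
        φ.Realize xs (Fin.snoc v a) := by
  rw [BoundedFormula.realize_ex]
  refine exists_congr fun a => ?_
  rw [BoundedFormula.realize_inf, realize_leF, Term.realize_var, liftT_realize]
  simp

/-- Main transfer lemma: Δ₀-formulas are absolute between ℕ and models of R0,
for standard (numeral) assignments. -/
lemma delta0_absolute (h : R0Facts M) :
    ∀ {α : Type} {n : ℕ} {φ : La.BoundedFormula α n}, IsDelta0 φ →
      ∀ (xs : α → ℕ) (v : Fin n → ℕ),
        (φ.Realize xs v ↔ φ.Realize (fun a => nM M (xs a)) (fun i => nM M (v i))) := by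
  intro α n φ hφ
  induction hφ with
  | falsum =>
    intro xs v
    simp [BoundedFormula.Realize]
  | equal t u =>
    intro xs v
    rw [BoundedFormula.realize_bdEqual, BoundedFormula.realize_bdEqual, ← nM_comp_elim,
      realize_term_nM h, realize_term_nM h]
    exact ⟨fun e => by rw [e], fun e => h.inj e⟩
  | le t u =>
    intro xs v
    rw [realize_leF, realize_leF, ← nM_comp_elim, realize_term_nM h, realize_term_nM h,
      h.le_iff, relMap_le_nat]
  | imp _ _ ih1 ih2 =>
    intro xs v
    rw [BoundedFormula.realize_imp, BoundedFormula.realize_imp, ih1, ih2]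
  | @ball n t ψ _ ih =>
    intro xs v
    rw [realize_ballF, realize_ballF, ← nM_comp_elim, realize_term_nM h]
    constructor
    · intro H a hle
      obtain ⟨i, hi, rfl⟩ := h.bdd _ _ hle
      rw [← nM_comp_snoc, ← ih]
      exact H i ((relMap_le_nat _ _).mpr hi)
    · intro H k hk
      have hk' : k ≤ t.realize (Sum.elim xs v) := (relMap_le_nat _ _).mp hk
      have := H (nM M k) (h.le _ _ hk')
      rwa [← nM_comp_snoc, ← ih] at this
  | @bex n t ψ _ ih =>
    intro xs v
    rw [realize_bexF, realize_bexF, ← nM_comp_elim, realize_term_nM h]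
    constructor
    · rintro ⟨k, hk, hφk⟩
      have hk' : k ≤ t.realize (Sum.elim xs v) := (relMap_le_nat _ _).mp hk
      refine ⟨nM M k, h.le _ _ hk', ?_⟩
      rwa [← nM_comp_snoc, ← ih]
    · rintro ⟨a, hle, hφa⟩
      obtain ⟨i, hi, rfl⟩ := h.bdd _ _ hle
      exact ⟨i, (relMap_le_nat _ _).mpr hi, by rwa [← nM_comp_snoc, ← ih] at hφa⟩

end Aux

section Aux2

variable {M : Type} [La.Structure M]

lemma num_relabel {β γ : Type} (g : β → γ) (k : ℕ) :
    (num k : La.Term β).relabel g = num k := by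
  induction k with
  | zero =>
    show Term.func (L := La) AFunc.zero _ = Term.func (L := La) AFunc.zero ![]
    congr
    funext i
    exact i.elim0
  | succ k ih =>
    show Term.func (L := La) AFunc.succ _ = Term.func (L := La) AFunc.succ ![num k]
    congr
    funext i
    fin_cases i
    simpa using ih

lemma liftT_num (n : ℕ) : liftT (num n : La.Term (Empty ⊕ Fin 0)) = num n :=
  num_relabel _ n

lemma vr_zero_eq_last : (vr 0 : La.Term (Empty ⊕ Fin 1)) = Term.var (Sum.inr (Fin.last 0)) := by
  rw [vr]
  exact congrArg _ (congrArg _ (Subsingleton.elim _ _))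

lemma realize_disjEq (n : ℕ) (v : Empty → M) (xs : Fin 1 → M) :
    (disjEq n).Realize v xs ↔ ∃ i ≤ n, xs 0 = nM M i := by
  induction n with
  | zero =>
    rw [disjEq, BoundedFormula.realize_bdEqual]
    constructor
    · intro h
      exact ⟨0, le_refl 0, by simpa [vr] using h⟩
    · rintro ⟨i, hi, e⟩
      interval_cases i
      simpa [vr] using e
  | succ n ih =>
    rw [disjEq, BoundedFormula.realize_sup, ih, BoundedFormula.realize_bdEqual]
    constructor
    · rintro (⟨i, hi, e⟩ | e)
      · exact ⟨i, Nat.le_succ_of_le hi, e⟩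
      · exact ⟨n + 1, le_refl _, by simpa [vr] using e⟩
    · rintro ⟨i, hi, e⟩
      rcases Nat.le_succ_iff.mp hi with hi' | rfl
      · exact Or.inl ⟨i, hi', e⟩
      · exact Or.inr (by simpa [vr] using e)

lemma realize_axR1 (m n : ℕ) :
    (M ⊨ axR1 m n) ↔ Structure.funMap (L := La) AFunc.add ![nM M m, nM M n] = nM M (m + n) := by
  rw [axR1, Sentence.Realize, Formula.Realize, BoundedFormula.realize_bdEqual]
  have : Term.realize (M := M) (Sum.elim (default : Empty → M) (default : Fin 0 → M)) (addT (num m) (num n)) =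
      Structure.funMap (L := La) AFunc.add ![nM M m, nM M n] := by
    show Structure.funMap (L := La) AFunc.add _ = _
    congr 1
    funext i
    fin_cases i <;> simp
  rw [this]
  simp

lemma realize_axR2 (m n : ℕ) :
    (M ⊨ axR2 m n) ↔ Structure.funMap (L := La) AFunc.mul ![nM M m, nM M n] = nM M (m * n) := by
  rw [axR2, Sentence.Realize, Formula.Realize, BoundedFormula.realize_bdEqual]
  have : Term.realize (M := M) (Sum.elim (default : Empty → M) (default : Fin 0 → M)) (mulT (num m) (num n)) =
      Structure.funMap (L := La) AFunc.mul ![nM M m, nM M n] := by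
    show Structure.funMap (L := La) AFunc.mul _ = _
    congr 1
    funext i
    fin_cases i <;> simp
  rw [this]
  simp

lemma realize_axR3 (m n : ℕ) : (M ⊨ axR3 m n) ↔ nM M m ≠ nM M n := by
  rw [axR3, Sentence.Realize, Formula.Realize, BoundedFormula.realize_not,
    BoundedFormula.realize_bdEqual]
  simp

lemma realize_axR4 (n : ℕ) :
    (M ⊨ axR4 n) ↔ ∀ x : M, Structure.RelMap (L := La) ARel.le ![x, nM M n] →
      ∃ i ≤ n, x = nM M i := by
  rw [axR4, Sentence.Realize, Formula.Realize, BoundedFormula.realize_all]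
  refine forall_congr' fun x => ?_
  rw [BoundedFormula.realize_imp, realize_leF, realize_disjEq]
  have h0 : Term.realize (Sum.elim (default : Empty → M) (Fin.snoc (default : Fin 0 → M) x)) (vr 0) = x := by
    show (Fin.snoc (default : Fin 0 → M) x : Fin 1 → M) 0 = x
    rw [show (0 : Fin 1) = Fin.last 0 from Subsingleton.elim _ _, Fin.snoc_last]
  rw [h0]
  simp only [realize_num]
  have h1 : (Fin.snoc (default : Fin 0 → M) x : Fin 1 → M) 0 = x := by
    rw [show (0 : Fin 1) = Fin.last 0 from Subsingleton.elim _ _, Fin.snoc_last]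
  rw [h1]

lemma realize_axR5' (m n : ℕ) :
    (M ⊨ axR5' m n) ↔ Structure.RelMap (L := La) ARel.le ![nM M m, nM M n] := by
  rw [axR5', Sentence.Realize, Formula.Realize, realize_leF]
  simp

lemma axiomsFacts (hadd : ∀ m n : ℕ, M ⊨ axR1 m n) (hmul : ∀ m n : ℕ, M ⊨ axR2 m n)
    (hne : ∀ m n : ℕ, m ≠ n → M ⊨ axR3 m n) (hbdd : ∀ n : ℕ, M ⊨ axR4 n)
    (hle : ∀ m n : ℕ, m ≤ n → M ⊨ axR5' m n) : R0Facts M := by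
  refine ⟨fun m n => (realize_axR1 m n).mp (hadd m n),
    fun m n => (realize_axR2 m n).mp (hmul m n),
    fun a b e => ?_,
    fun n x hx => (realize_axR4 n).mp (hbdd n) x hx,
    fun m n h => (realize_axR5' m n).mp (hle m n h)⟩
  by_contra hab
  exact (realize_axR3 a b).mp (hne a b hab) e

/-- Δ₀-ness of the axioms. -/
lemma disjEq_delta0 (n : ℕ) : IsDelta0 (disjEq n) := by
  induction n with
  | zero => exact IsDelta0.equal _ _
  | succ n ih =>
    show IsDelta0 (((disjEq n).imp ⊥).imp _)
    exact IsDelta0.imp (IsDelta0.imp ih IsDelta0.falsum) (IsDelta0.equal _ _)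

lemma axR1_delta0 (m n : ℕ) : IsDelta0 (axR1 m n) := IsDelta0.equal _ _
lemma axR2_delta0 (m n : ℕ) : IsDelta0 (axR2 m n) := IsDelta0.equal _ _
lemma axR3_delta0 (m n : ℕ) : IsDelta0 (axR3 m n) :=
  IsDelta0.imp (IsDelta0.equal _ _) IsDelta0.falsum
lemma axR4_delta0 (n : ℕ) : IsDelta0 (axR4 n) := by
  rw [axR4, vr_zero_eq_last, ← liftT_num n]
  exact IsDelta0.ball _ (disjEq_delta0 n)
lemma axR5'_delta0 (m n : ℕ) : IsDelta0 (axR5' m n) := IsDelta0.le _ _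

lemma sentence_isSigma1 {σ : La.Sentence} (h : IsDelta0 σ) : IsSigma1 σ :=
  ⟨0, σ, h, rfl⟩

end Aux2

lemma memR1 (m n : ℕ) : axR1 m n ∈ R0 := Or.inl (Or.inl (Or.inl (Or.inl ⟨m, n, rfl⟩)))
lemma memR2 (m n : ℕ) : axR2 m n ∈ R0 := Or.inl (Or.inl (Or.inl (Or.inr ⟨m, n, rfl⟩)))
lemma memR3 {m n : ℕ} (h : m ≠ n) : axR3 m n ∈ R0 := Or.inl (Or.inl (Or.inr ⟨m, n, h, rfl⟩))
lemma memR4 (n : ℕ) : axR4 n ∈ R0 := Or.inl (Or.inr ⟨n, rfl⟩)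
lemma memR5 {m n : ℕ} (h : m ≤ n) : axR5' m n ∈ R0 := Or.inr ⟨m, n, h, rfl⟩

lemma sentence_realize_exs {X : Type} [La.Structure X] {m : ℕ} (δ : La.BoundedFormula Empty m) :
    (X ⊨ δ.exs) ↔ ∃ xs : Fin m → X, δ.Realize (fun a => a.elim) xs := by
  unfold Sentence.Realize
  rw [BoundedFormula.realize_exs]
  exact exists_congr fun xs =>
    iff_of_eq (congrArg (fun v => δ.Realize v xs) (funext fun a => a.elim))

/-- an `L_a`-theory is Σ₁-complete iff it proves every axiom of `R₀`. -/
theorem statement2 (T : La.Theory) :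
    (∀ σ : La.Sentence, IsSigma1 σ → (ℕ ⊨ σ) → T ⊨ᵇ σ) ↔ (∀ φ ∈ R0, T ⊨ᵇ φ) := by
  constructor
  · intro h φ hφ
    rcases hφ with (((⟨m, n, rfl⟩ | ⟨m, n, rfl⟩) | ⟨m, n, hmn, rfl⟩) | ⟨n, rfl⟩) | ⟨m, n, hmn, rfl⟩
    · exact h _ (sentence_isSigma1 (axR1_delta0 m n)) ((realize_axR1 m n).mpr (natFacts.add m n))
    · exact h _ (sentence_isSigma1 (axR2_delta0 m n)) ((realize_axR2 m n).mpr (natFacts.mul m n))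
    · refine h _ (sentence_isSigma1 (axR3_delta0 m n)) ((realize_axR3 m n).mpr ?_)
      simpa using hmn
    · exact h _ (sentence_isSigma1 (axR4_delta0 n)) ((realize_axR4 n).mpr (natFacts.bdd n))
    · exact h _ (sentence_isSigma1 (axR5'_delta0 m n)) ((realize_axR5' m n).mpr (natFacts.le m n hmn))
  · intro hR σ hσ hN
    obtain ⟨m, δ, hδ, rfl⟩ := hσ
    rw [Theory.models_sentence_iff]
    intro M
    have facts : R0Facts M := axiomsFacts
      (fun m n => ((hR _ (memR1 m n)).realize_sentence M))
      (fun m n => ((hR _ (memR2 m n)).realize_sentence M))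
      (fun m n hmn => ((hR _ (memR3 hmn)).realize_sentence M))
      (fun n => ((hR _ (memR4 n)).realize_sentence M))
      (fun m n hmn => ((hR _ (memR5 hmn)).realize_sentence M))
    rw [sentence_realize_exs] at hN ⊢
    obtain ⟨xs, hxs⟩ := hN
    refine ⟨fun i => nM M (xs i), ?_⟩
    have key := (delta0_absolute facts hδ (fun a => a.elim) xs).mp hxs
    have hdef : (fun a => nM M ((fun a => a.elim : Empty → ℕ) a)) =
        (fun a => a.elim : Empty → M) := funext fun a => a.elim
    rwa [hdef] at key
end

section
/- Let M be an L_a-structure, v ∈ M a certified element, and k ∈ ℕ such that M ⊨ m̄ ≠ v for all m < k. Then for all m, n, p ≤ k, M ⊨ (m̄ × n̄) + p̄ = ((m·n)+p)̄. -/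
open FirstOrder FirstOrder.Language

section Semantics
open FirstOrder.Language.Structure

variable (M : Type) [La.Structure M]

/-- The interpretation of `0` in `M`. -/
def zM : M := funMap (L := La) AFunc.zero ![]
/-- The interpretation of successor in `M`. -/
def sM (x : M) : M := funMap (L := La) AFunc.succ ![x]
/-- The interpretation of addition in `M`. -/
def addM (x y : M) : M := funMap (L := La) AFunc.add ![x, y]
/-- The interpretation of multiplication in `M`. -/
def mulM (x y : M) : M := funMap (L := La) AFunc.mul ![x, y]
/-- The interpretation of `≤` in `M`. -/
def leM (x y : M) : Prop := RelMap (L := La) ARel.le ![x, y]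
/-- `x < y` in `M`: `x ≤ y ∧ x ≠ y`. -/
def ltM (x y : M) : Prop := leM M x y ∧ x ≠ y
/-- The interpretation of the numeral `m̄` in `M`. -/
def natM : ℕ → M
  | 0 => zM M
  | m + 1 => sM M (natM m)

/-- An element `v` of an `L_a`-structure is *certified* if it satisfies the
certification axioms A1–A10. -/
structure Certified (v : M) : Prop where
  a1 : leM M (zM M) v
  a2 : ∀ x : M, ltM M x v → leM M (sM M x) v
  a3 : ∀ x : M, leM M x (zM M) ↔ x = zM M
  a4 : ∀ x : M, ltM M x v → ∀ y : M, leM M y (sM M x) ↔ (leM M y x ∨ y = sM M x)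
  a5 : ∀ x y z : M, leM M x v → leM M y v → leM M z v →
    sM M (addM M (mulM M x y) z) ≠ zM M
  a6 : ∀ x y z w : M, leM M x v → leM M y v → leM M z v → leM M w v →
    sM M (addM M (mulM M x y) z) = sM M w → addM M (mulM M x y) z = w
  a7 : ∀ x y : M, leM M x v → leM M y v → addM M (mulM M x y) (zM M) = mulM M x y
  a8 : ∀ x y z : M, leM M x v → leM M y v → leM M z v →
    addM M (mulM M x y) (sM M z) = sM M (addM M (mulM M x y) z)
  a9 : ∀ x : M, leM M x v → mulM M x (zM M) = zM M
  a10 : ∀ x y : M, leM M x v → leM M y v → mulM M x (sM M y) = addM M (mulM M x y) x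

end Semantics

/-!
Below a certified `v`, axioms A7–A10 are the recursion equations of `+` and `×`. Since no
numeral below `k̄` equals `v`, A2 puts every numeral up to `k̄` below `v`, so these equations
apply to such numerals: induction on `p` gives `(x × y) + p̄ = S^p (x × y)`, and with A9, A10
induction on `n` then gives `m̄ × n̄ = (m·n)̄`.
-/

lemma natM_succ (M : Type) [La.Structure M] (m : ℕ) : natM M (m + 1) = sM M (natM M m) := rfl

lemma iterate_sM_natM (M : Type) [La.Structure M] (p a : ℕ) :
    (sM M)^[p] (natM M a) = natM M (a + p) := by
  induction p with
  | zero => rfl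
  | succ p ih => rw [Function.iterate_succ_apply', ih, ← natM_succ, Nat.add_assoc]

namespace Certified

variable {M : Type} [La.Structure M] {v : M} {k : ℕ}

lemma natM_le (hv : Certified M v) (hk : ∀ m : ℕ, m < k → natM M m ≠ v) {m : ℕ} (hm : m ≤ k) :
    leM M (natM M m) v := by
  induction m with
  | zero => exact hv.a1
  | succ m ih => exact hv.a2 _ ⟨ih (Nat.le_of_succ_le hm), hk m hm⟩

lemma add_natM_eq_iterate (hv : Certified M v) (hk : ∀ m : ℕ, m < k → natM M m ≠ v)
    {p : ℕ} (hp : p ≤ k) {x y : M} (hx : leM M x v) (hy : leM M y v) :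
    addM M (mulM M x y) (natM M p) = (sM M)^[p] (mulM M x y) := by
  induction p with
  | zero => exact hv.a7 x y hx hy
  | succ p ih =>
    rw [natM_succ, Function.iterate_succ_apply', ← ih (Nat.le_of_succ_le hp)]
    exact hv.a8 x y _ hx hy (hv.natM_le hk (Nat.le_of_succ_le hp))

lemma mul_natM (hv : Certified M v) (hk : ∀ m : ℕ, m < k → natM M m ≠ v)
    {m n : ℕ} (hm : m ≤ k) (hn : n ≤ k) :
    mulM M (natM M m) (natM M n) = natM M (m * n) := by
  induction n with
  | zero => exact hv.a9 _ (hv.natM_le hk hm)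
  | succ n ih =>
    have hn' : n ≤ k := Nat.le_of_succ_le hn
    rw [natM_succ, hv.a10 _ _ (hv.natM_le hk hm) (hv.natM_le hk hn'),
      hv.add_natM_eq_iterate hk hm (hv.natM_le hk hm) (hv.natM_le hk hn'), ih hn',
      iterate_sM_natM, Nat.mul_succ]

end Certified

/-- if `v` is certified and `m̄ ≠ v` in `M` for all `m < k`, then
for all `m, n, p ≤ k`, `M ⊨ (m̄ × n̄) + p̄ = ((m·n)+p)̄`. -/
theorem statement5 (M : Type) [La.Structure M] (v : M) (hv : Certified M v)
    (k : ℕ) (hk : ∀ m : ℕ, m < k → natM M m ≠ v) :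
    ∀ m n p : ℕ, m ≤ k → n ≤ k → p ≤ k →
      addM M (mulM M (natM M m) (natM M n)) (natM M p) = natM M (m * n + p) := by
  intro m n p hm hn hp
  rw [hv.add_natM_eq_iterate hk hp (hv.natM_le hk hm) (hv.natM_le hk hn),
    hv.mul_natM hk hm hn, iterate_sM_natM]
end
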